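/- Let d ≥ 1 and let f : ℝ^d → [0,∞) be integrable, even (f(−w) = f(w)), and such that its Fourier transform f̂ is nonnegative. Then for every T > 0 there exists a constant C_T > 0, depending only on d and T, such that for every x ∈ ℝ^d, ∫₀^T ∫_{ℝ^d} ∫_{ℝ^d} p(s,x,y)·p(s,x,z)·f(y−z) dy dz ds ≤ C_T·∫_{ℝ^d} f̂(ξ)/(1+|ξ|²) dξ, where both sides are allowed to be infinite. -/

import Mathlib

/-!
Substituting `z = y - w` and completing the square in `y` turns the inner double integral into
`∫ p(2s,0,w) f(w) dw`. The heat kernel `p(2s,0,·)` is the inverse Fourier transform of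
`exp(-4π²s|ξ|²)`, so Fubini turns this into `∫ f̂(ξ) exp(-4π²s|ξ|²) dξ`, a nonnegative integrand.
Integrating in time first, `∫₀ᵀ exp(-4π²s|ξ|²) ds ≤ min(T, 1/(4π²|ξ|²)) ≤ (T+1)/(1+|ξ|²)`,
which gives the bound with `C_T = T + 1`.
-/

open MeasureTheory Real

/-- The Gaussian heat kernel on `ℝ^d`: `p(t,x,y) = (2πt)^(-d/2) exp(-|x-y|²/(2t))`. -/
noncomputable def gaussKernelEuc (d : ℕ) (t : ℝ) (x y : EuclideanSpace ℝ (Fin d)) : ℝ :=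
  (2 * Real.pi * t) ^ (-(d:ℝ)/2) * Real.exp (-‖x - y‖^2 / (2*t))

/-- The Fourier transform `f̂(ξ) = ∫ exp(-2πi⟨ξ,w⟩) f(w) dw` of an even function `f`, which is
real-valued and hence equals the cosine transform. -/
noncomputable def cosFourier (d : ℕ) (f : EuclideanSpace ℝ (Fin d) → ℝ)
    (ξ : EuclideanSpace ℝ (Fin d)) : ℝ :=
  ∫ w, Real.cos (2 * Real.pi * (inner ℝ ξ w : ℝ)) * f w

open scoped RealInnerProductSpace ENNReal
open Set

section Gaussian

variable {V : Type*} [NormedAddCommGroup V] [InnerProductSpace ℝ V] [FiniteDimensional ℝ V]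
  [MeasurableSpace V] [BorelSpace V]

theorem integrable_exp_neg_mul_sq_norm {b : ℝ} (hb : 0 < b) :
    Integrable (fun v : V => rexp (-b * ‖v‖ ^ 2)) := by
  simpa [Complex.norm_exp, ← Complex.ofReal_pow] using
    (GaussianFourier.integrable_cexp_neg_mul_sq_norm_add (V := V) (b := b) (by simpa) 0 0).norm

theorem integral_exp_neg_mul_sq_norm_mul_cos_inner {b : ℝ} (hb : 0 < b) (w : V) :
    ∫ v : V, rexp (-b * ‖v‖ ^ 2) * Real.cos (2 * π * ⟪w, v⟫) =
      (π / b) ^ (Module.finrank ℝ V / 2 : ℝ) * rexp (-π ^ 2 * ‖w‖ ^ 2 / b) := by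
  have hb' : 0 < (b : ℂ).re := by simpa
  have h := congrArg Complex.re
    (GaussianFourier.integral_cexp_neg_mul_sq_norm_add hb' (2 * π * Complex.I) w)
  rw [← RCLike.re_to_complex, ← integral_re
    (GaussianFourier.integrable_cexp_neg_mul_sq_norm_add hb' _ w)] at h
  convert h using 1
  · congr 1 with v
    simp [Complex.exp_re, ← Complex.ofReal_pow]
  · have hpow : (π / b : ℂ) ^ (Module.finrank ℝ V / 2 : ℂ) =
        ((π / b) ^ (Module.finrank ℝ V / 2 : ℝ) : ℝ) := by
      rw [Complex.ofReal_cpow (by positivity)]; push_cast; rfl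
    have hexp : (2 * π * Complex.I) ^ 2 * (‖w‖ : ℂ) ^ 2 / (4 * b) =
        ((-π ^ 2 * ‖w‖ ^ 2 / b : ℝ) : ℂ) := by
      push_cast
      rw [mul_pow, mul_pow, Complex.I_sq]
      ring
    rw [hpow, hexp, ← Complex.ofReal_exp, ← Complex.ofReal_mul, Complex.ofReal_re]

end Gaussian

section HeatKernel

variable {d : ℕ}

theorem gaussKernelEuc_eq_mul_exp_neg_mul_sq_norm {t : ℝ} (x y : EuclideanSpace ℝ (Fin d)) :
    gaussKernelEuc d t x y = (2 * π * t) ^ (-(d : ℝ) / 2) * rexp (-(2 * t)⁻¹ * ‖x - y‖ ^ 2) := by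
  rw [gaussKernelEuc]
  congr 2
  ring

theorem gaussKernelEuc_nonneg {t : ℝ} (ht : 0 ≤ t) (x y : EuclideanSpace ℝ (Fin d)) :
    0 ≤ gaussKernelEuc d t x y := by
  rw [gaussKernelEuc]; positivity

theorem gaussKernelEuc_le {t : ℝ} (ht : 0 ≤ t) (x y : EuclideanSpace ℝ (Fin d)) :
    gaussKernelEuc d t x y ≤ (2 * π * t) ^ (-(d : ℝ) / 2) := by
  rw [gaussKernelEuc]
  exact mul_le_of_le_one_right (by positivity) (exp_le_one_iff.2
    (div_nonpos_of_nonpos_of_nonneg (neg_nonpos.2 (sq_nonneg _)) (by positivity)))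

theorem continuous_gaussKernelEuc (t : ℝ) (x : EuclideanSpace ℝ (Fin d)) :
    Continuous (gaussKernelEuc d t x) := by
  unfold gaussKernelEuc; fun_prop

theorem integrable_gaussKernelEuc {t : ℝ} (ht : 0 < t) (x : EuclideanSpace ℝ (Fin d)) :
    Integrable (gaussKernelEuc d t x) := by
  simp_rw [funext (gaussKernelEuc_eq_mul_exp_neg_mul_sq_norm (t := t) x)]
  exact ((integrable_exp_neg_mul_sq_norm (by positivity)).comp_sub_left x).const_mul _

theorem integral_gaussKernelEuc {t : ℝ} (ht : 0 < t) (x : EuclideanSpace ℝ (Fin d)) :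
    ∫ y, gaussKernelEuc d t x y = 1 := by
  simp_rw [gaussKernelEuc_eq_mul_exp_neg_mul_sq_norm (t := t) x, integral_const_mul]
  rw [integral_sub_left_eq_self (fun v => rexp (-(2 * t)⁻¹ * ‖v‖ ^ 2)),
    GaussianFourier.integral_rexp_neg_mul_sq_norm (by positivity), finrank_euclideanSpace_fin,
    div_inv_eq_mul, neg_div, rpow_neg (by positivity)]
  rw [show π * (2 * t) = 2 * π * t by ring, inv_mul_cancel₀ (by positivity)]

theorem gaussKernelEuc_mul_gaussKernelEuc_sub {s : ℝ} (hs : 0 < s)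
    (x y w : EuclideanSpace ℝ (Fin d)) :
    gaussKernelEuc d s x y * gaussKernelEuc d s x (y - w) =
      gaussKernelEuc d (2 * s) 0 w * gaussKernelEuc d (s / 2) (x + (2⁻¹ : ℝ) • w) y := by
  have hconst : (2 * π * s) ^ (-(d : ℝ) / 2) * (2 * π * s) ^ (-(d : ℝ) / 2) =
      (2 * π * (2 * s)) ^ (-(d : ℝ) / 2) * (2 * π * (s / 2)) ^ (-(d : ℝ) / 2) := by
    rw [← mul_rpow (by positivity) (by positivity), ← mul_rpow (by positivity) (by positivity)]
    ring_nf
  have hsq : ‖x - y‖ ^ 2 + ‖x - (y - w)‖ ^ 2 =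
      ‖w‖ ^ 2 / 2 + 2 * ‖x + (2⁻¹ : ℝ) • w - y‖ ^ 2 := by
    rw [show x - (y - w) = (x - y) + w by abel,
      show x + (2⁻¹ : ℝ) • w - y = (x - y) + (2⁻¹ : ℝ) • w by abel,
      norm_add_sq_real, norm_add_sq_real, real_inner_smul_right, norm_smul]
    norm_num
    ring
  have hexp : -‖x - y‖ ^ 2 / (2 * s) + -‖x - (y - w)‖ ^ 2 / (2 * s) =
      -‖w‖ ^ 2 / (2 * (2 * s)) + -‖x + (2⁻¹ : ℝ) • w - y‖ ^ 2 / (2 * (s / 2)) := by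
    generalize ‖x + (2⁻¹ : ℝ) • w - y‖ = m at hsq ⊢
    field_simp
    linear_combination -2 * hsq
  simp only [gaussKernelEuc, zero_sub, norm_neg]
  calc _ = ((2 * π * s) ^ (-(d : ℝ) / 2) * (2 * π * s) ^ (-(d : ℝ) / 2)) *
        rexp (-‖x - y‖ ^ 2 / (2 * s) + -‖x - (y - w)‖ ^ 2 / (2 * s)) := by
        rw [exp_add]; ring
    _ = _ := by rw [hconst, hexp, exp_add]; ring

theorem lintegral_gaussKernelEuc {t : ℝ} (ht : 0 < t) (x : EuclideanSpace ℝ (Fin d)) :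
    ∫⁻ y, ENNReal.ofReal (gaussKernelEuc d t x y) = 1 := by
  rw [← ofReal_integral_eq_lintegral_ofReal (integrable_gaussKernelEuc ht x)
    (.of_forall (gaussKernelEuc_nonneg ht.le x)), integral_gaussKernelEuc ht, ENNReal.ofReal_one]

theorem lintegral_lintegral_gaussKernelEuc_mul_eq {s : ℝ} (hs : 0 < s)
    {f : EuclideanSpace ℝ (Fin d) → ℝ} (hf : AEMeasurable f) (x : EuclideanSpace ℝ (Fin d)) :
    ∫⁻ y, ∫⁻ z, ENNReal.ofReal (gaussKernelEuc d s x y * gaussKernelEuc d s x z * f (y - z)) =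
      ∫⁻ w, ENNReal.ofReal (gaussKernelEuc d (2 * s) 0 w * f w) := by
  have hsub : ∀ y, ∫⁻ z, ENNReal.ofReal
      (gaussKernelEuc d s x y * gaussKernelEuc d s x z * f (y - z)) =
      ∫⁻ w, ENNReal.ofReal (gaussKernelEuc d s x y * gaussKernelEuc d s x (y - w) * f w) :=
    fun y => by
      simpa only [sub_sub_cancel] using lintegral_sub_left_eq_self (μ := volume) (fun w =>
        ENNReal.ofReal (gaussKernelEuc d s x y * gaussKernelEuc d s x (y - w) * f w)) y
  have hmeas : AEMeasurable (Function.uncurry fun y w => ENNReal.ofReal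
      (gaussKernelEuc d s x y * gaussKernelEuc d s x (y - w) * f w)) (volume.prod volume) := by
    have hp := continuous_gaussKernelEuc (d := d) s x
    refine ENNReal.measurable_ofReal.comp_aemeasurable (AEMeasurable.mul ?_ hf.comp_snd)
    exact (by fun_prop : Continuous fun p : EuclideanSpace ℝ (Fin d) × _ =>
      gaussKernelEuc d s x p.1 * gaussKernelEuc d s x (p.1 - p.2)).aemeasurable
  simp_rw [hsub]
  rw [lintegral_lintegral_swap hmeas]
  congr with w
  simp_rw [gaussKernelEuc_mul_gaussKernelEuc_sub hs, mul_right_comm _ _ (f w),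
    ENNReal.ofReal_mul' (gaussKernelEuc_nonneg (by positivity : 0 ≤ s / 2) _ _)]
  rw [lintegral_const_mul' _ _ ENNReal.ofReal_ne_top, lintegral_gaussKernelEuc (by positivity),
    mul_one]

end HeatKernel

theorem norm_cos_mul_le (θ a : ℝ) : ‖Real.cos θ * a‖ ≤ ‖a‖ := by
  rw [norm_mul]
  exact mul_le_of_le_one_left (norm_nonneg _) (abs_cos_le_one _)

section Fourier

variable {d : ℕ}

theorem gaussKernelEuc_zero_eq_integral_exp_mul_cos {t : ℝ} (ht : 0 < t)
    (w : EuclideanSpace ℝ (Fin d)) :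
    gaussKernelEuc d t 0 w =
      ∫ ξ, rexp (-(2 * π ^ 2 * t) * ‖ξ‖ ^ 2) * Real.cos (2 * π * ⟪ξ, w⟫) := by
  simp_rw [real_inner_comm w]
  rw [integral_exp_neg_mul_sq_norm_mul_cos_inner (by positivity), finrank_euclideanSpace_fin,
    gaussKernelEuc, zero_sub, norm_neg, neg_div, rpow_neg (by positivity),
    ← inv_rpow (by positivity)]
  congr 2 <;> field_simp

theorem norm_cosFourier_le {f : EuclideanSpace ℝ (Fin d) → ℝ} (hf : Integrable f)
    (ξ : EuclideanSpace ℝ (Fin d)) : ‖cosFourier d f ξ‖ ≤ ∫ w, ‖f w‖ :=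
  (norm_integral_le_integral_norm _).trans <| integral_mono_of_nonneg
    (.of_forall fun _ => norm_nonneg _) hf.norm (.of_forall fun _ => norm_cos_mul_le _ _)

theorem continuous_cosFourier {f : EuclideanSpace ℝ (Fin d) → ℝ} (hf : Integrable f) :
    Continuous (cosFourier d f) := by
  refine continuous_of_dominated (bound := fun w => ‖f w‖) (fun ξ => ?_) (fun ξ => ?_) hf.norm ?_
  · exact (by fun_prop : Continuous fun w => Real.cos (2 * π * ⟪ξ, w⟫)).aestronglyMeasurable.mul
      hf.1
  · exact .of_forall fun _ => norm_cos_mul_le _ _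
  · exact .of_forall fun w => by fun_prop

theorem integral_integral_mul_cos_mul_eq_integral_mul_cosFourier
    {f g : EuclideanSpace ℝ (Fin d) → ℝ} (hf : Integrable f) (hg : Integrable g) :
    ∫ w, (∫ ξ, g ξ * Real.cos (2 * π * ⟪ξ, w⟫)) * f w = ∫ ξ, g ξ * cosFourier d f ξ := by
  have hprod : Integrable (Function.uncurry fun w ξ : EuclideanSpace ℝ (Fin d) =>
      g ξ * Real.cos (2 * π * ⟪ξ, w⟫) * f w) (volume.prod volume) := by
    refine (hf.norm.mul_prod hg.norm).mono' ?_ (.of_forall fun p => ?_)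
    · exact ((hg.1.comp_snd).mul (by fun_prop : Continuous fun p : EuclideanSpace ℝ (Fin d) × _ =>
        Real.cos (2 * π * ⟪p.2, p.1⟫)).aestronglyMeasurable).mul hf.1.comp_fst
    · dsimp only [Function.uncurry_def]
      rw [mul_assoc, norm_mul, mul_comm ‖f _‖]
      exact mul_le_mul_of_nonneg_left (norm_cos_mul_le _ _) (norm_nonneg _)
  simp_rw [← integral_mul_const]
  rw [integral_integral_swap hprod]
  simp_rw [cosFourier, ← integral_const_mul, mul_assoc]

theorem integral_gaussKernelEuc_mul_eq_integral_exp_mul_cosFourier {t : ℝ} (ht : 0 < t)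
    {f : EuclideanSpace ℝ (Fin d) → ℝ} (hf : Integrable f) :
    ∫ w, gaussKernelEuc d t 0 w * f w =
      ∫ ξ, rexp (-(2 * π ^ 2 * t) * ‖ξ‖ ^ 2) * cosFourier d f ξ := by
  simp_rw [gaussKernelEuc_zero_eq_integral_exp_mul_cos ht]
  exact integral_integral_mul_cos_mul_eq_integral_mul_cosFourier hf
    (integrable_exp_neg_mul_sq_norm (by positivity))

theorem lintegral_lintegral_gaussKernelEuc_mul_eq_lintegral_cosFourier {s : ℝ} (hs : 0 < s)
    {f : EuclideanSpace ℝ (Fin d) → ℝ} (hf : Integrable f) (hf0 : ∀ w, 0 ≤ f w)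
    (hfourier : ∀ ξ, 0 ≤ cosFourier d f ξ) (x : EuclideanSpace ℝ (Fin d)) :
    ∫⁻ y, ∫⁻ z, ENNReal.ofReal (gaussKernelEuc d s x y * gaussKernelEuc d s x z * f (y - z)) =
      ∫⁻ ξ, ENNReal.ofReal (cosFourier d f ξ * rexp (-(4 * π ^ 2 * ‖ξ‖ ^ 2) * s)) := by
  have hs2 : 0 < 2 * s := by positivity
  have hpf : Integrable fun w => gaussKernelEuc d (2 * s) 0 w * f w :=
    hf.bdd_mul (continuous_gaussKernelEuc _ 0).aestronglyMeasurable
      (.of_forall fun w => by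
        rw [norm_of_nonneg (gaussKernelEuc_nonneg hs2.le 0 w)]
        exact gaussKernelEuc_le hs2.le 0 w)
  have hgf : Integrable fun ξ => rexp (-(2 * π ^ 2 * (2 * s)) * ‖ξ‖ ^ 2) * cosFourier d f ξ :=
    (integrable_exp_neg_mul_sq_norm (by positivity)).mul_bdd
      (continuous_cosFourier hf).aestronglyMeasurable (.of_forall (norm_cosFourier_le hf))
  rw [lintegral_lintegral_gaussKernelEuc_mul_eq hs hf.aemeasurable,
    ← ofReal_integral_eq_lintegral_ofReal hpf
      (.of_forall fun w => mul_nonneg (gaussKernelEuc_nonneg hs2.le 0 w) (hf0 w)),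
    integral_gaussKernelEuc_mul_eq_integral_exp_mul_cosFourier hs2 hf,
    ofReal_integral_eq_lintegral_ofReal hgf
      (.of_forall fun ξ => mul_nonneg (exp_pos _).le (hfourier ξ))]
  congr with ξ
  ring_nf

end Fourier

theorem lintegral_Ioc_exp_neg_mul_le {T r a : ℝ} (hT : 0 ≤ T) (hr : 0 ≤ r) (hra : r ≤ a) :
    ∫⁻ s in Ioc 0 T, ENNReal.ofReal (rexp (-a * s)) ≤ ENNReal.ofReal ((T + 1) / (1 + r)) := by
  have hint : ∀ b : ℝ, IntegrableOn (fun s => rexp (b * s)) (Ioc 0 T) :=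
    fun b => (by fun_prop : Continuous fun s => rexp (b * s)).integrableOn_Ioc
  have hle_T : ∫ s in Ioc 0 T, rexp (-a * s) ≤ T := by
    calc ∫ s in Ioc 0 T, rexp (-a * s) ≤ ∫ s in Ioc 0 T, (1 : ℝ) :=
          setIntegral_mono_on (hint _) (integrableOn_const (by simp)) measurableSet_Ioc
            fun s hs => exp_le_one_iff.2 (by nlinarith [hs.1])
      _ = T := by simp [hT]
  have hle_one : r * ∫ s in Ioc 0 T, rexp (-a * s) ≤ 1 := by
    rcases hr.eq_or_lt with rfl | hr
    · simp
    have ha : 0 < a := hr.trans_le hra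
    calc r * ∫ s in Ioc 0 T, rexp (-a * s) ≤ r * ∫ s in Ioi 0, rexp (-a * s) :=
          mul_le_mul_of_nonneg_left (setIntegral_mono_set
            (integrableOn_exp_mul_Ioi (neg_lt_zero.2 ha) 0) (.of_forall fun _ => (exp_pos _).le)
            Ioc_subset_Ioi_self.eventuallyLE) hr.le
      _ = r / a := by
          rw [integral_exp_mul_Ioi (neg_lt_zero.2 ha), mul_zero, exp_zero]; ring
      _ ≤ 1 := (div_le_one ha).2 hra
  rw [← ofReal_integral_eq_lintegral_ofReal (hint _) (.of_forall fun _ => (exp_pos _).le)]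
  exact ENNReal.ofReal_le_ofReal ((le_div_iff₀ (by positivity)).2 (by linarith))

theorem gauss_convolution_fourier_bound_general (d : ℕ) (T : ℝ) (hT : 0 < T) :
    ∃ C > (0:ℝ), ∀ f : EuclideanSpace ℝ (Fin d) → ℝ,
      Integrable f → (∀ w, 0 ≤ f w) → (∀ w, f (-w) = f w) →
      (∀ ξ, 0 ≤ cosFourier d f ξ) →
      ∀ x : EuclideanSpace ℝ (Fin d),
        (∫⁻ s in Set.Ioc (0:ℝ) T, ∫⁻ y, ∫⁻ z, ENNReal.ofReal
            (gaussKernelEuc d s x y * gaussKernelEuc d s x z * f (y - z)))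
          ≤ ENNReal.ofReal C *
            ∫⁻ ξ, ENNReal.ofReal (cosFourier d f ξ / (1 + ‖ξ‖^2)) := by
  refine ⟨T + 1, by linarith, fun f hf hf0 _ hfourier x => ?_⟩
  have hmeas : Measurable (Function.uncurry fun s ξ =>
      ENNReal.ofReal (cosFourier d f ξ * rexp (-(4 * π ^ 2 * ‖ξ‖ ^ 2) * s))) := by
    have hcont := continuous_cosFourier hf
    exact ENNReal.measurable_ofReal.comp (by fun_prop : Continuous _).measurable
  have hfreq : ∀ ξ : EuclideanSpace ℝ (Fin d), ‖ξ‖ ^ 2 ≤ 4 * π ^ 2 * ‖ξ‖ ^ 2 := fun ξ =>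
    le_mul_of_one_le_left (sq_nonneg _) (by nlinarith [pi_gt_three])
  calc _ = ∫⁻ s in Ioc 0 T, ∫⁻ ξ,
        ENNReal.ofReal (cosFourier d f ξ * rexp (-(4 * π ^ 2 * ‖ξ‖ ^ 2) * s)) :=
        setLIntegral_congr_fun measurableSet_Ioc fun s hs =>
          lintegral_lintegral_gaussKernelEuc_mul_eq_lintegral_cosFourier hs.1 hf hf0 hfourier x
    _ = ∫⁻ ξ, ENNReal.ofReal (cosFourier d f ξ) *
          ∫⁻ s in Ioc 0 T, ENNReal.ofReal (rexp (-(4 * π ^ 2 * ‖ξ‖ ^ 2) * s)) := by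
        rw [lintegral_lintegral_swap hmeas.aemeasurable]
        simp_rw [ENNReal.ofReal_mul (hfourier _), lintegral_const_mul' _ _ ENNReal.ofReal_ne_top]
    _ ≤ ∫⁻ ξ, ENNReal.ofReal (cosFourier d f ξ) * ENNReal.ofReal ((T + 1) / (1 + ‖ξ‖ ^ 2)) :=
        lintegral_mono fun ξ => mul_le_mul_right
          (lintegral_Ioc_exp_neg_mul_le hT.le (sq_nonneg _) (hfreq ξ)) _
    _ = _ := by
        rw [← lintegral_const_mul' _ _ ENNReal.ofReal_ne_top]
        congr with ξ
        rw [← ENNReal.ofReal_mul (hfourier ξ), ← ENNReal.ofReal_mul (by linarith)]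
        ring_nf

/-- Dalang-type bound: for integrable, even `f ≥ 0` with nonnegative Fourier transform,
`∫₀^T ∫∫ p(s,x,y) p(s,x,z) f(y-z) dy dz ds ≤ C_T ∫ f̂(ξ)/(1+|ξ|²) dξ`, with `C_T` depending
only on `d` and `T`; both sides may be infinite. -/
theorem gauss_convolution_fourier_bound (d : ℕ) (hd : 1 ≤ d) (T : ℝ) (hT : 0 < T) :
    ∃ C > (0:ℝ), ∀ f : EuclideanSpace ℝ (Fin d) → ℝ,
      Integrable f → (∀ w, 0 ≤ f w) → (∀ w, f (-w) = f w) →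
      (∀ ξ, 0 ≤ cosFourier d f ξ) →
      ∀ x : EuclideanSpace ℝ (Fin d),
        (∫⁻ s in Set.Ioc (0:ℝ) T, ∫⁻ y, ∫⁻ z, ENNReal.ofReal
            (gaussKernelEuc d s x y * gaussKernelEuc d s x z * f (y - z)))
          ≤ ENNReal.ofReal C *
            ∫⁻ ξ, ENNReal.ofReal (cosFourier d f ξ / (1 + ‖ξ‖^2)) :=
  gauss_convolution_fourier_bound_general d T hT
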